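/- Let F ≤ E be finite fields with E an F-vector space of dimension e, fix an F-basis of E, and let φ : E → F^{e×e} send α to the matrix, in this basis, of the F-linear map 'multiplication by α' on E. Let r, u be positive integers and let B ∈ E^{r×u} be a totally nonsingular matrix. Then the block matrix A obtained by applying φ to each entry of B (an r × u array of e × e blocks over F) is block totally nonsingular. -/

import Mathlib

/-!
Passing to the `k × k` block sub-array commutes with applying `φ` entrywise, so every square
block sub-array of `A` is `φ` applied to a square submatrix `S` of `B`. By Silvester's theorem
on determinants of block matrices with commuting blocks, its determinant is `det (φ (det S))`,
i.e. the norm `N_{E/F} (det S)`, which is nonzero because `det S` is.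
-/

/-- A matrix is totally nonsingular if every square submatrix (given by injections
selecting rows and columns) is nonsingular. -/
def IsTotallyNonsingular {F : Type*} [Field F] {r u : ℕ}
    (A : Matrix (Fin r) (Fin u) F) : Prop :=
  ∀ (k : ℕ), 1 ≤ k → ∀ (ρ : Fin k → Fin r) (σ : Fin k → Fin u),
    Function.Injective ρ → Function.Injective σ →
      (Matrix.of fun p q : Fin k => A (ρ p) (σ q)).det ≠ 0

/-- A block matrix (an r × u array of e × e blocks) is block totally nonsingular if
every square sub-array of blocks is nonsingular. -/
def IsBlockTotallyNonsingular {F : Type*} [Field F] {r u e : ℕ}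
    (A : Matrix (Fin r × Fin e) (Fin u × Fin e) F) : Prop :=
  ∀ (k : ℕ), 1 ≤ k → ∀ (ρ : Fin k → Fin r) (σ : Fin k → Fin u),
    Function.Injective ρ → Function.Injective σ →
      (Matrix.of fun p q : Fin k × Fin e => A (ρ p.1, p.2) (σ q.1, q.2)).det ≠ 0

open Matrix

noncomputable abbrev Matrix.blockLeftMulMatrix {R S ι m : Type*} [CommRing R] [CommRing S]
    [Algebra R S] [Fintype ι] [DecidableEq ι] (b : Module.Basis ι R S) (M : Matrix m m S) :
    Matrix (m × ι) (m × ι) R :=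
  comp m m ι ι R (M.map (Algebra.leftMulMatrix b))

theorem Matrix.det_blockLeftMulMatrix {R S ι m : Type*} [CommRing R] [CommRing S] [Algebra R S]
    [Fintype ι] [DecidableEq ι] [Fintype m] [DecidableEq m] (b : Module.Basis ι R S)
    (M : Matrix m m S) :
    (M.blockLeftMulMatrix b).det = Algebra.norm R M.det := by
  rw [Algebra.norm_eq_matrix_det b, ← AlgHom.coe_toRingHom, det_det]
  rfl

theorem Matrix.det_blockLeftMulMatrix_ne_zero {K L ι m : Type*} [Field K] [Field L] [Algebra K L]
    [Fintype ι] [DecidableEq ι] [Fintype m] [DecidableEq m] (b : Module.Basis ι K L)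
    {M : Matrix m m L} (hM : M.det ≠ 0) :
    (M.blockLeftMulMatrix b).det ≠ 0 := by
  rwa [det_blockLeftMulMatrix, Algebra.norm_ne_zero_iff_of_basis b]

theorem stmt_14_general {F E : Type*} [Field F] [Field E] [Algebra F E]
    {e r u : ℕ} (b : Module.Basis (Fin e) F E)
    (B : Matrix (Fin r) (Fin u) E) (hB : IsTotallyNonsingular B) :
    IsBlockTotallyNonsingular
      (Matrix.of fun (p : Fin r × Fin e) (q : Fin u × Fin e) =>
        Algebra.leftMulMatrix b (B p.1 q.1) p.2 q.2) := by
  intro k hk ρ σ hρ hσ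
  have hblock : (of fun p q : Fin k × Fin e =>
      Algebra.leftMulMatrix b (B (ρ p.1) (σ q.1)) p.2 q.2) =
      (of fun p q : Fin k => B (ρ p) (σ q)).blockLeftMulMatrix b := by
    ext p q
    rfl
  simpa only [of_apply, hblock] using det_blockLeftMulMatrix_ne_zero b (hB k hk ρ σ hρ hσ)

/-- Let F ≤ E be finite fields with E of dimension e over F, fix an
F-basis b of E, and let φ = Algebra.leftMulMatrix b.  If B ∈ E^{r×u} is totally
nonsingular, then the block matrix obtained by applying φ entrywise to B is block
totally nonsingular. -/
theorem stmt_14 {F E : Type*} [Field F] [Fintype F] [Field E] [Fintype E] [Algebra F E]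
    {e r u : ℕ} (b : Module.Basis (Fin e) F E)
    (hr : 0 < r) (hu : 0 < u)
    (B : Matrix (Fin r) (Fin u) E) (hB : IsTotallyNonsingular B) :
    IsBlockTotallyNonsingular
      (Matrix.of fun (p : Fin r × Fin e) (q : Fin u × Fin e) =>
        Algebra.leftMulMatrix b (B p.1 q.1) p.2 q.2) :=
  stmt_14_general b B hB
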